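/- arXiv:2511.02972 — 3 statements merged into one kernel-verified Lean document; each statement's English description precedes it below -/
import Mathlib

section
/- Let h : ℝ≥0 → ℝ≥0 be a monotonically increasing function and let δ > 0. Then the inequality (d/dr) h(r) ≤ h(r)^{1+δ} holds for all r ∈ ℝ≥0 outside a Borel subset E of finite Lebesgue measure (at points where the derivative exists, which is almost everywhere by monotonicity). -/
open MeasureTheory Set Filter

/-!
For `r` beyond a point `r₀` with `h r₀ > 0`, the function `g = -h ^ (-δ)` is monotone and bounded,
and `g' = δ h' h ^ (-δ - 1)`, so `h' > h ^ (1 + δ)` forces `g' > δ`. The derivative of a bounded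
monotone function is the density of its (finite) Stieltjes measure, so by Markov's inequality
it exceeds `δ` only on a set of finite measure. If no such `r₀` exists, `h = 0` and the set is empty.
-/

lemma Monotone.isFiniteMeasure_stieltjesFunction {g : ℝ → ℝ} (hg : Monotone g) {C : ℝ}
    (hC : ∀ x, |g x| ≤ C) : IsFiniteMeasure hg.stieltjesFunction.measure := by
  refine hg.stieltjesFunction.isFiniteMeasure_of_forall_abs_le (C := C) fun x => abs_le.2 ⟨?_, ?_⟩
  · calc -C ≤ g x := (abs_le.1 (hC x)).1
      _ ≤ hg.stieltjesFunction x := hg.le_rightLim le_rfl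
  · calc hg.stieltjesFunction x ≤ g (x + 1) := hg.rightLim_le (lt_add_one x)
      _ ≤ C := (abs_le.1 (hC (x + 1))).2

theorem Monotone.volume_setOf_lt_deriv_lt_top {g : ℝ → ℝ} (hg : Monotone g) {C : ℝ}
    (hC : ∀ x, |g x| ≤ C) {c : ℝ} (hc : 0 < c) : volume {x | c < deriv g x} < ⊤ := by
  set μ := hg.stieltjesFunction.measure
  have := hg.isFiniteMeasure_stieltjesFunction hC
  have hc' : ENNReal.ofReal c ≠ 0 := (ENNReal.ofReal_pos.2 hc).ne'
  have hsub : {x | c < deriv g x} ≤ᵐ[volume] {x | ENNReal.ofReal c ≤ μ.rnDeriv volume x} := by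
    filter_upwards [hg.ae_hasDerivAt] with x hx hxc
    change c < deriv g x at hxc
    exact ENNReal.ofReal_le_of_le_toReal (hx.deriv ▸ hxc).le
  calc volume {x | c < deriv g x}
      ≤ volume {x | ENNReal.ofReal c ≤ μ.rnDeriv volume x} := measure_mono_ae hsub
    _ ≤ (∫⁻ x, μ.rnDeriv volume x) / ENNReal.ofReal c :=
      meas_ge_le_lintegral_div (μ.measurable_rnDeriv volume).aemeasurable hc' ENNReal.ofReal_ne_top
    _ < ⊤ := ENNReal.div_lt_top (Measure.lintegral_rnDeriv_lt_top μ volume).ne hc'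

theorem Monotone.volume_setOf_rpow_lt_deriv_lt_top {h : ℝ → ℝ} (hmono : Monotone h) {δ : ℝ}
    (hδ : 0 < δ) {r₀ : ℝ} (hr₀ : 0 < h r₀) :
    volume {r | r₀ < r ∧ DifferentiableAt ℝ h r ∧ h r ^ (1 + δ) < deriv h r} < ⊤ := by
  set c := h r₀
  set g : ℝ → ℝ := fun x => -(max (h x) c ^ (-δ))
  have hmax_pos : ∀ x, 0 < max (h x) c := fun x => lt_max_of_lt_right hr₀
  have hg : Monotone g := fun x y hxy =>
    neg_le_neg <| Real.rpow_le_rpow_of_nonpos (hmax_pos x) (max_le_max_right c (hmono hxy))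
      (by linarith)
  have hg_bdd : ∀ x, |g x| ≤ c ^ (-δ) := fun x => by
    rw [abs_neg, abs_of_nonneg (Real.rpow_nonneg (hmax_pos x).le _)]
    exact Real.rpow_le_rpow_of_nonpos hr₀ (le_max_right _ _) (by linarith)
  refine lt_of_le_of_lt (measure_mono ?_) (hg.volume_setOf_lt_deriv_lt_top hg_bdd hδ)
  rintro r ⟨hr, hdiff, hlt⟩
  have hhr : 0 < h r := hr₀.trans_le (hmono hr.le)
  have hg_eq : g =ᶠ[nhds r] fun y => -(h y ^ (-δ)) := by
    filter_upwards [Ioi_mem_nhds hr] with y hy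
    show -(max (h y) c ^ (-δ)) = _
    rw [max_eq_left (hmono hy.le)]
  have hg_deriv : HasDerivAt g (δ * deriv h r * h r ^ (-δ - 1)) r := by
    refine (((hdiff.hasDerivAt.rpow_const (Or.inl hhr.ne')).neg).congr_of_eventuallyEq
      hg_eq).congr_deriv ?_
    ring
  have hpow : h r ^ (1 + δ) * h r ^ (-δ - 1) = 1 := by
    rw [← Real.rpow_add hhr, show (1 + δ) + (-δ - 1) = 0 by ring, Real.rpow_zero]
  have hpow_pos : 0 < h r ^ (-δ - 1) := Real.rpow_pos_of_pos hhr _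
  calc δ = δ * h r ^ (1 + δ) * h r ^ (-δ - 1) := by rw [mul_assoc, hpow, mul_one]
    _ < δ * deriv h r * h r ^ (-δ - 1) := by gcongr
    _ = deriv g r := hg_deriv.deriv.symm

/-- Borel's Calculus Lemma: for a monotone increasing nonnegative function `h` and `δ > 0`,
the inequality `deriv h r ≤ h r ^ (1 + δ)` holds for all `r ≥ 0` outside a set of finite
Lebesgue measure (at points where `h` is differentiable). -/
theorem borel_calculus_lemma (h : ℝ → ℝ) (hmono : Monotone h) (hnonneg : ∀ r, 0 ≤ h r)
    (δ : ℝ) (hδ : 0 < δ) :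
    volume {r : ℝ | 0 ≤ r ∧ DifferentiableAt ℝ h r ∧ h r ^ (1 + δ) < deriv h r} < ⊤ := by
  by_cases hpos : ∃ r₀, 0 < h r₀
  · obtain ⟨r₀, hr₀⟩ := hpos
    have hsub : {r : ℝ | 0 ≤ r ∧ DifferentiableAt ℝ h r ∧ h r ^ (1 + δ) < deriv h r} ⊆
        Icc 0 r₀ ∪ {r | r₀ < r ∧ DifferentiableAt ℝ h r ∧ h r ^ (1 + δ) < deriv h r} := by
      rintro r ⟨hr, hrest⟩
      rcases le_or_gt r r₀ with hle | hgt
      exacts [Or.inl ⟨hr, hle⟩, Or.inr ⟨hgt, hrest⟩]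
    refine (measure_mono hsub).trans_lt <| (measure_union_le _ _).trans_lt ?_
    exact ENNReal.add_lt_top.2 ⟨measure_Icc_lt_top, hmono.volume_setOf_rpow_lt_deriv_lt_top hδ hr₀⟩
  · push Not at hpos
    have hzero : h = 0 := funext fun x => le_antisymm (hpos x) (hnonneg x)
    simp [hzero, Real.zero_rpow (by linarith : 1 + δ ≠ 0)]
end

section
/- Let h : ℝ≥0 → ℝ≥0 be monotone increasing, let δ > 0, and let r₀ ≥ 0 with h(r₀) > 0. Then the Lebesgue measure of the set E = {r > r₀ : h is differentiable at r and h'(r) > h(r)^{1+δ}} is at most 1/(δ · h(r₀)^δ). -/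
open MeasureTheory Set Filter Topology

/-!
On `E`, the function `-h ^ (-δ) / δ` has derivative
`h' / h ^ (1 + δ) > 1`. Truncating `h` below at `h r₀` makes this antiderivative monotone on all of
`ℝ` and bounded above by `0`, so the Lebesgue measure of `E` is at most the mass of its Stieltjes
measure on `(r₀, ∞)`, which is at most `0 - (-h r₀ ^ (-δ) / δ) = 1 / (δ h r₀ ^ δ)`.
-/

namespace Monotone

variable {g : ℝ → ℝ}

/-- The Radon–Nikodym derivative of the Stieltjes measure of `g` is a.e. the derivative of `g`. -/
theorem volume_le_stieltjesFunction_measure (hg : Monotone g) {s : Set ℝ}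
    (hs : ∀ x ∈ s, ∃ g', HasDerivAt g g' x ∧ 1 ≤ g') :
    volume s ≤ hg.stieltjesFunction.measure s := by
  set μ := hg.stieltjesFunction.measure
  have one_le_rnDeriv : ∀ᵐ x, x ∈ s → 1 ≤ μ.rnDeriv volume x := by
    filter_upwards [hg.ae_hasDerivAt] with x hx hxs
    obtain ⟨g', hg', hle⟩ := hs x hxs
    simpa using ENNReal.ofReal_le_of_le_toReal (hle.trans_eq (hg'.unique hx))
  calc volume s = ∫⁻ _ in s, 1 := (setLIntegral_one s).symm
    _ ≤ ∫⁻ x in s, μ.rnDeriv volume x := setLIntegral_mono_ae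
        (μ.measurable_rnDeriv volume).aemeasurable one_le_rnDeriv
    _ ≤ μ s := Measure.setLIntegral_rnDeriv_le s

theorem stieltjesFunction_measure_Ioi_le (hg : Monotone g) {M : ℝ} (hM : ∀ x, g x ≤ M)
    (a : ℝ) : hg.stieltjesFunction.measure (Ioi a) ≤ ENNReal.ofReal (M - g a) := by
  rw [← iUnion_Ioc_right]
  refine le_of_tendsto' (tendsto_measure_iUnion_atTop (antitone_const.Ioc monotone_id)) fun b => ?_
  rw [Function.comp_apply, StieltjesFunction.measure_Ioc]
  gcongr
  · exact (hg.rightLim_le (lt_add_one b)).trans (hM _)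
  · exact hg.le_rightLim le_rfl

end Monotone

noncomputable def truncatedRpowPotential (h : ℝ → ℝ) (δ c r : ℝ) : ℝ :=
  -max (h r) c ^ (-δ) / δ

section truncatedRpowPotential

variable {h : ℝ → ℝ} {δ c : ℝ}

theorem monotone_truncatedRpowPotential (hh : Monotone h) (hδ : 0 ≤ δ) (hc : 0 < c) :
    Monotone (truncatedRpowPotential h δ c) := by
  intro a b hab
  have hpow : max (h b) c ^ (-δ) ≤ max (h a) c ^ (-δ) :=
    Real.rpow_le_rpow_of_nonpos (lt_max_of_lt_right hc) (max_le_max_right c (hh hab))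
      (neg_nonpos.mpr hδ)
  unfold truncatedRpowPotential
  gcongr

theorem truncatedRpowPotential_nonpos (hδ : 0 ≤ δ) (hc : 0 ≤ c) (r : ℝ) :
    truncatedRpowPotential h δ c r ≤ 0 := by
  have : 0 ≤ max (h r) c ^ (-δ) := Real.rpow_nonneg (le_max_of_le_right hc) _
  unfold truncatedRpowPotential
  rw [neg_div]
  exact neg_nonpos.mpr (by positivity)

theorem hasDerivAt_truncatedRpowPotential {h' x : ℝ} (hd : HasDerivAt h h' x) (hδ : δ ≠ 0)
    (hc : 0 < c) (hx : ∀ᶠ r in 𝓝 x, c ≤ h r) :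
    HasDerivAt (truncatedRpowPotential h δ c) (h' * h x ^ (-δ - 1)) x := by
  have hhx : 0 < h x := hc.trans_le hx.self_of_nhds
  have hpot : HasDerivAt (fun r => -h r ^ (-δ) / δ) (-(h' * -δ * h x ^ (-δ - 1)) / δ) x :=
    (hd.rpow_const (Or.inl hhx.ne')).neg.div_const δ
  rw [show -(h' * -δ * h x ^ (-δ - 1)) / δ = h' * h x ^ (-δ - 1) by field_simp] at hpot
  refine hpot.congr_of_eventuallyEq ?_
  filter_upwards [hx] with r hr
  simp only [truncatedRpowPotential, max_eq_left hr]

end truncatedRpowPotential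

theorem borel_calculus_lemma_quantitative_general (h : ℝ → ℝ) (hmono : Monotone h)
    (δ : ℝ) (hδ : 0 < δ) (r₀ : ℝ) (hpos : 0 < h r₀) :
    volume {r : ℝ | r₀ < r ∧ DifferentiableAt ℝ h r ∧ h r ^ (1 + δ) < deriv h r}
      ≤ ENNReal.ofReal (1 / (δ * h r₀ ^ δ)) := by
  set g := truncatedRpowPotential h δ (h r₀)
  have hg : Monotone g := monotone_truncatedRpowPotential hmono hδ.le hpos
  have hderiv : ∀ r ∈ {r : ℝ | r₀ < r ∧ DifferentiableAt ℝ h r ∧ h r ^ (1 + δ) < deriv h r},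
      ∃ g', HasDerivAt g g' r ∧ 1 ≤ g' := by
    rintro r ⟨hr, hdiff, hlt⟩
    have hhr : 0 < h r := hpos.trans_le (hmono hr.le)
    refine ⟨_, hasDerivAt_truncatedRpowPotential hdiff.hasDerivAt hδ.ne' hpos
      (eventually_gt_nhds hr |>.mono fun r hr => hmono hr.le), ?_⟩
    rw [show -δ - 1 = -(1 + δ) by ring, Real.rpow_neg hhr.le, ← div_eq_mul_inv]
    exact (one_lt_div (by positivity)).mpr hlt |>.le
  calc _ ≤ hg.stieltjesFunction.measure _ := hg.volume_le_stieltjesFunction_measure hderiv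
    _ ≤ hg.stieltjesFunction.measure (Ioi r₀) := measure_mono fun r hr => hr.1
    _ ≤ ENNReal.ofReal (0 - g r₀) :=
        hg.stieltjesFunction_measure_Ioi_le (truncatedRpowPotential_nonpos hδ.le hpos.le) r₀
    _ = ENNReal.ofReal (1 / (δ * h r₀ ^ δ)) := by
        simp only [g, truncatedRpowPotential, max_self, Real.rpow_neg hpos.le]
        ring_nf

/-- Quantitative Borel Calculus Lemma: for monotone increasing `h : ℝ → ℝ` with `h ≥ 0`,
`δ > 0` and `r₀ ≥ 0` with `h r₀ > 0`, the set of `r > r₀` where `h` is differentiable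
and `deriv h r > h r ^ (1+δ)` has Lebesgue measure at most `1 / (δ * h r₀ ^ δ)`. -/
theorem borel_calculus_lemma_quantitative (h : ℝ → ℝ) (hmono : Monotone h)
    (hnonneg : ∀ r, 0 ≤ h r) (δ : ℝ) (hδ : 0 < δ) (r₀ : ℝ) (hr₀ : 0 ≤ r₀)
    (hpos : 0 < h r₀) :
    volume {r : ℝ | r₀ < r ∧ DifferentiableAt ℝ h r ∧ h r ^ (1 + δ) < deriv h r}
      ≤ ENNReal.ofReal (1 / (δ * h r₀ ^ δ)) :=
  borel_calculus_lemma_quantitative_general h hmono δ hδ r₀ hpos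
end

section
/- Let γ : ℂ → ℝ≥0 be a nonnegative continuous function, define N(r) = ∫₀^r (1/t)(∫_{Δ(t)} γ dA) dt, assumed finite for all r > 0, and suppose there exists r₀ > 0 with N(r) ≥ 1/r for all r ≥ r₀. Then for every δ > 0 the inequality ∫₀^{2π} γ(r e^{iθ}) dθ/(2π) ≤ ( N(r) )^{(1+δ)²} holds for all r ∈ ℝ≥0 outside a Borel subset E of finite Lebesgue measure. -/
/-!
Write `A` for the circle average of `γ` and `M(t) = ∫₀ᵗ u A(u) du`. In polar coordinates
`∫_{Δ(t)} γ dA = 2π M(t)`, so `N(r) = ∫₀ʳ 2π M(t)/t dt`. If `A` vanishes on `[0, ∞)` there is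
nothing to prove; otherwise `N` grows like `log r`, and the exceptional set beyond the point where
`N ≥ 1` is cut into the pieces `S_k` on which `2^k ≤ N < 2^(k+1)`, so that `A > κ := 2^(kp)` on
`S_k`, with `p = (1 + δ)²`. Let `x` be the last point with `N(x) ≤ 2^(k+1)`. The part of `S_k`
below `x/2`, of measure `λ₁` and lying in `[1, ∞)`, gives `M ≥ κ λ₁` on `[x/2, x]`; the part
above `x/2`, of measure `λ₂`, gives `M ≥ κ x λ₂ / 4` on `[x - λ₂/2, x]`. Integrating `M(t)/t`
over these intervals yields `κ λ₁ ≲ N(x)` and `κ λ₂² ≲ N(x)`, hence `|S_k| ≲ 2^(k(1-p)/2)`,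
which is summable in `k`.
-/

open MeasureTheory Set Real Filter

section Polar

variable {E : Type*} [NormedAddCommGroup E] [NormedSpace ℝ E]

theorem setIntegral_Ioo_circleMap_eq_two_pi_smul_circleAverage (f : ℂ → E) (c : ℂ) (R : ℝ) :
    ∫ θ in Ioo (-π) π, f (circleMap c R θ) = (2 * π) • circleAverage f c R := by
  rw [circleAverage_eq_integral_add (-π), smul_inv_smul₀ (by positivity),
    intervalIntegral.integral_comp_add_right (fun θ ↦ f (circleMap c R θ)),
    intervalIntegral.integral_of_le (by linarith [pi_pos]), integral_Ioc_eq_integral_Ioo]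
  ring_nf

theorem setIntegral_ball_eq_setIntegral_polar (γ : ℂ → E) (t : ℝ) :
    ∫ z in Metric.ball 0 t, γ z =
      ∫ p in Ioo 0 t ×ˢ Ioo (-π) π, p.1 • γ (circleMap 0 p.1 p.2) := by
  rw [← integral_indicator Metric.isOpen_ball.measurableSet,
    ← Complex.integral_comp_polarCoord_symm, polarCoord_target,
    ← integral_indicator (measurableSet_Ioi.prod measurableSet_Ioo),
    ← integral_indicator (measurableSet_Ioo.prod measurableSet_Ioo)]
  congr 1
  ext ⟨r, θ⟩
  by_cases hr : 0 < r
  · have : Complex.polarCoord.symm (r, θ) = circleMap 0 r θ := by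
      simp [circleMap, Complex.exp_mul_I]
    by_cases hθ : θ ∈ Ioo (-π) π
    · simp [indicator, this, hr, hθ, abs_of_pos hr]
    · simp [indicator, hθ]
  · simp [indicator, hr]

theorem setIntegral_ball_eq_two_pi_smul_integral_circleAverage {γ : ℂ → E} (hγ : Continuous γ)
    {t : ℝ} (ht : 0 ≤ t) :
    ∫ z in Metric.ball 0 t, γ z = (2 * π) • ∫ r in 0..t, r • circleAverage γ 0 r := by
  have hint : IntegrableOn (fun p : ℝ × ℝ ↦ p.1 • γ (circleMap 0 p.1 p.2))
      (Ioo 0 t ×ˢ Ioo (-π) π) :=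
    (ContinuousOn.integrableOn_compact (isCompact_Icc.prod isCompact_Icc)
      (by fun_prop)).mono_set (prod_mono Ioo_subset_Icc_self Ioo_subset_Icc_self)
  rw [setIntegral_ball_eq_setIntegral_polar, Measure.volume_eq_prod, setIntegral_prod _ hint,
    intervalIntegral.integral_of_le ht, integral_Ioc_eq_integral_Ioo, ← integral_smul]
  refine setIntegral_congr_fun measurableSet_Ioo fun r _ ↦ ?_
  rw [integral_smul, setIntegral_Ioo_circleMap_eq_two_pi_smul_circleAverage, smul_comm]

end Polar

namespace RadialCounting

noncomputable def mass (f : ℝ → ℝ) (t : ℝ) : ℝ := ∫ u in 0..t, u * f u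

noncomputable def counting (c : ℝ) (f : ℝ → ℝ) (r : ℝ) : ℝ := ∫ t in 0..r, c / t * mass f t

variable {f : ℝ → ℝ} {c κ t x : ℝ}

theorem mass_eq_sq_mul_integral (f : ℝ → ℝ) (t : ℝ) :
    mass f t = t ^ 2 * ∫ s in 0..1, s * f (t * s) := by
  rcases eq_or_ne t 0 with rfl | ht
  · simp [mass]
  have h := intervalIntegral.integral_comp_mul_left (fun u ↦ u * f u) ht (a := 0) (b := 1)
  simp only [mul_zero, mul_one, smul_eq_mul] at h
  calc mass f t = t * (t⁻¹ * ∫ u in 0..t, u * f u) := by rw [mass, mul_inv_cancel_left₀ ht]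
    _ = t ^ 2 * ∫ s in 0..1, s * f (t * s) := by
        simp only [← h, mul_assoc, intervalIntegral.integral_const_mul]
        ring

theorem continuous_div_mul_mass (hf : Continuous f) : Continuous fun t ↦ c / t * mass f t := by
  have h : (fun t ↦ c / t * mass f t) = fun t ↦ c * t * ∫ s in 0..1, s * f (t * s) := by
    funext t
    rcases eq_or_ne t 0 with rfl | ht
    · simp
    · rw [mass_eq_sq_mul_integral]
      field_simp
  rw [h]
  exact (continuous_const.mul continuous_id).mul
    (intervalIntegral.continuous_parametric_intervalIntegral_of_continuous' (by fun_prop) 0 1)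

theorem continuous_counting (hf : Continuous f) : Continuous (counting c f) :=
  intervalIntegral.continuous_primitive
    (fun _ _ ↦ (continuous_div_mul_mass hf).intervalIntegrable _ _) 0

theorem counting_sub_counting (hf : Continuous f) (a b : ℝ) :
    counting c f b - counting c f a = ∫ t in a..b, c / t * mass f t :=
  intervalIntegral.integral_interval_sub_left
    ((continuous_div_mul_mass hf).intervalIntegrable _ _)
    ((continuous_div_mul_mass hf).intervalIntegrable _ _)

theorem mass_nonneg (hf0 : ∀ r, 0 ≤ r → 0 ≤ f r) (ht : 0 ≤ t) : 0 ≤ mass f t :=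
  intervalIntegral.integral_nonneg ht fun u hu ↦ mul_nonneg hu.1 (hf0 u hu.1)

theorem monotoneOn_mass (hf : Continuous f) (hf0 : ∀ r, 0 ≤ r → 0 ≤ f r) :
    MonotoneOn (mass f) (Ici 0) := by
  have hcont : Continuous fun u ↦ u * f u := by fun_prop
  exact fun a ha b _ hab ↦ intervalIntegral.integral_mono_interval le_rfl ha hab
    ((ae_restrict_mem measurableSet_Ioc).mono fun u hu ↦ mul_nonneg hu.1.le (hf0 u hu.1.le))
    (hcont.intervalIntegrable _ _)

theorem counting_nonneg (hf0 : ∀ r, 0 ≤ r → 0 ≤ f r) (hc : 0 ≤ c) {r : ℝ} (hr : 0 ≤ r) :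
    0 ≤ counting c f r :=
  intervalIntegral.integral_nonneg hr fun _ ht ↦
    mul_nonneg (div_nonneg hc ht.1) (mass_nonneg hf0 ht.1)

theorem mul_measureReal_le_mass (hf : Continuous f) (hf0 : ∀ r, 0 ≤ r → 0 ≤ f r) {U : Set ℝ}
    (hU : MeasurableSet U) (ht : 0 ≤ t) (hUt : U ⊆ Icc 0 t) (hκ : ∀ u ∈ U, κ ≤ u * f u) :
    κ * volume.real U ≤ mass f t := by
  have hint : IntegrableOn (fun u ↦ u * f u) (Icc 0 t) :=
    (by fun_prop : Continuous fun u ↦ u * f u).integrableOn_Icc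
  calc κ * volume.real U ≤ ∫ u in U, u * f u :=
        setIntegral_ge_of_const_le_real hU (measure_mono hUt |>.trans_lt measure_Icc_lt_top).ne
          hκ (hint.mono_set hUt)
    _ ≤ ∫ u in Icc 0 t, u * f u :=
        setIntegral_mono_set hint
          ((ae_restrict_mem measurableSet_Icc).mono fun u hu ↦ mul_nonneg hu.1 (hf0 u hu.1))
          hUt.eventuallyLE
    _ = mass f t := by
        rw [mass, intervalIntegral.integral_of_le ht, integral_Icc_eq_integral_Ioc]

theorem le_counting_of_le_mass (hf : Continuous f) (hf0 : ∀ r, 0 ≤ r → 0 ≤ f r) (hc : 0 ≤ c)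
    {a b K : ℝ} (hK : 0 ≤ K) (ha : 0 < a) (hab : a ≤ b) (hmass : ∀ t ∈ Icc a b, K ≤ mass f t) :
    c * K * (b - a) / b ≤ counting c f b := by
  have hb : 0 < b := ha.trans_le hab
  have hbound : ∀ t ∈ Icc a b, c * K / b ≤ c / t * mass f t := fun t ht ↦ by
    have ht0 : 0 < t := ha.trans_le ht.1
    calc c * K / b ≤ c * K / t := div_le_div_of_nonneg_left (by positivity) ht0 ht.2
      _ = c / t * K := by ring
      _ ≤ c / t * mass f t := by
          gcongr
          exact hmass t ht
  calc c * K * (b - a) / b = ∫ _ in a..b, c * K / b := by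
        rw [intervalIntegral.integral_const, smul_eq_mul]
        ring
    _ ≤ ∫ t in a..b, c / t * mass f t :=
        intervalIntegral.integral_mono_on hab intervalIntegrable_const
          ((continuous_div_mul_mass hf).intervalIntegrable _ _) hbound
    _ = counting c f b - counting c f a := (counting_sub_counting hf a b).symm
    _ ≤ counting c f b := sub_le_self _ (counting_nonneg hf0 hc ha.le)

theorem exists_mass_pos (hf : Continuous f) (hf0 : ∀ r, 0 ≤ r → 0 ≤ f r) {t₀ : ℝ}
    (ht₀ : 0 ≤ t₀) (hft₀ : 0 < f t₀) : ∃ t₁, 0 < t₁ ∧ 0 < mass f t₁ := by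
  obtain ⟨l, u, ⟨hl, hu⟩, hpos⟩ :=
    mem_nhds_iff_exists_Ioo_subset.1 (hf.continuousAt.eventually (lt_mem_nhds hft₀))
  have hcont : Continuous fun u ↦ u * f u := by fun_prop
  refine ⟨u, ht₀.trans_lt hu, ?_⟩
  calc 0 < ∫ v in t₀..u, v * f v :=
        intervalIntegral.intervalIntegral_pos_of_pos_on (hcont.intervalIntegrable _ _)
          (fun v hv ↦ mul_pos (ht₀.trans_lt hv.1) (hpos ⟨hl.trans hv.1, hv.2⟩)) hu
    _ ≤ mass f u :=
        intervalIntegral.integral_mono_interval ht₀ hu.le le_rfl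
          ((ae_restrict_mem measurableSet_Ioc).mono fun v hv ↦ mul_nonneg hv.1.le (hf0 v hv.1.le))
          (hcont.intervalIntegrable _ _)

theorem tendsto_counting_atTop (hf : Continuous f) (hf0 : ∀ r, 0 ≤ r → 0 ≤ f r) (hc : 0 < c)
    {t₀ : ℝ} (ht₀ : 0 ≤ t₀) (hft₀ : 0 < f t₀) : Tendsto (counting c f) atTop atTop := by
  obtain ⟨t₁, ht₁, hm⟩ := exists_mass_pos hf hf0 ht₀ hft₀
  have hlog : ∀ b, t₁ ≤ b → c * mass f t₁ * log (b / t₁) ≤ counting c f b := fun b hb ↦ by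
    calc c * mass f t₁ * log (b / t₁) = ∫ t in t₁..b, c * mass f t₁ * t⁻¹ := by
          rw [intervalIntegral.integral_const_mul, integral_inv_of_pos ht₁ (ht₁.trans_le hb)]
      _ ≤ ∫ t in t₁..b, c / t * mass f t := by
          refine intervalIntegral.integral_mono_on hb ?_
            ((continuous_div_mul_mass hf).intervalIntegrable _ _) fun t ht ↦ ?_
          · refine (intervalIntegral.intervalIntegrable_inv (fun t ht ↦ ?_)
              continuousOn_id).const_mul _
            rw [uIcc_of_le hb] at ht
            exact (ht₁.trans_le ht.1).ne'
          · have := monotoneOn_mass hf hf0 ht₁.le (ht₁.le.trans ht.1) ht.1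
            calc c * mass f t₁ * t⁻¹ = c / t * mass f t₁ := by ring
              _ ≤ c / t * mass f t :=
                  mul_le_mul_of_nonneg_left this (div_nonneg hc.le (ht₁.le.trans ht.1))
      _ = counting c f b - counting c f t₁ := (counting_sub_counting hf t₁ b).symm
      _ ≤ counting c f b := sub_le_self _ (counting_nonneg hf0 hc.le ht₁.le)
  refine tendsto_atTop_mono' atTop ((eventually_ge_atTop t₁).mono hlog) ?_
  exact (tendsto_log_atTop.comp (tendsto_id.atTop_div_const ht₁)).const_mul_atTop
    (by positivity)

theorem mul_measureReal_inter_Iio_half_le (hf : Continuous f) (hf0 : ∀ r, 0 ≤ r → 0 ≤ f r)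
    (hc : 0 ≤ c) {S : Set ℝ} (hS : MeasurableSet S) (hS1 : S ⊆ Ici 1) (hκ : 0 ≤ κ)
    (hfS : ∀ u ∈ S, κ ≤ f u) (hx : 0 < x) :
    c * κ * volume.real (S ∩ Iio (x / 2)) / 2 ≤ counting c f x := by
  have hmass : ∀ t ∈ Icc (x / 2) x, κ * volume.real (S ∩ Iio (x / 2)) ≤ mass f t :=
    fun t ht ↦ mul_measureReal_le_mass hf hf0 (hS.inter measurableSet_Iio) (by linarith [ht.1])
      (fun u hu ↦ ⟨zero_le_one.trans (hS1 hu.1), hu.2.le.trans ht.1⟩)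
      fun u hu ↦ by
        simpa using mul_le_mul (hS1 hu.1) (hfS u hu.1) hκ (zero_le_one.trans (hS1 hu.1))
  have h := le_counting_of_le_mass hf hf0 hc (mul_nonneg hκ measureReal_nonneg) (half_pos hx)
    (half_le_self hx.le) hmass
  calc c * κ * volume.real (S ∩ Iio (x / 2)) / 2
      = c * (κ * volume.real (S ∩ Iio (x / 2))) * (x - x / 2) / x := by field_simp; ring
    _ ≤ counting c f x := h

theorem measureReal_le_measureReal_inter_Iic_add {T : Set ℝ} {a : ℝ} (hT : T ⊆ Icc a x)
    (htx : t ≤ x) : volume.real T ≤ volume.real (T ∩ Iic t) + (x - t) := by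
  have hcover : T ⊆ (T ∩ Iic t) ∪ Ioc t x := fun u hu ↦ by
    by_cases hut : u ≤ t
    · exact Or.inl ⟨hu, hut⟩
    · exact Or.inr ⟨not_le.1 hut, (hT hu).2⟩
  have hfin : volume ((T ∩ Iic t) ∪ Ioc t x) ≠ ⊤ :=
    (measure_union_le _ _).trans_lt (ENNReal.add_lt_top.2
      ⟨(measure_mono (inter_subset_left.trans hT)).trans_lt measure_Icc_lt_top,
        measure_Ioc_lt_top⟩) |>.ne
  calc volume.real T ≤ volume.real ((T ∩ Iic t) ∪ Ioc t x) := measureReal_mono hcover hfin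
    _ ≤ volume.real (T ∩ Iic t) + volume.real (Ioc t x) := measureReal_union_le _ _
    _ = volume.real (T ∩ Iic t) + (x - t) := by rw [Real.volume_real_Ioc_of_le htx]

theorem mul_sq_measureReal_diff_Iio_half_le (hf : Continuous f) (hf0 : ∀ r, 0 ≤ r → 0 ≤ f r)
    (hc : 0 ≤ c) {S : Set ℝ} (hS : MeasurableSet S) (hSx : S ⊆ Iic x) (hκ : 0 ≤ κ)
    (hfS : ∀ u ∈ S, κ ≤ f u) (hx : 0 < x) :
    c * κ * volume.real (S \ Iio (x / 2)) ^ 2 / 8 ≤ counting c f x := by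
  set T := S \ Iio (x / 2)
  set l := volume.real T
  have hT : T ⊆ Icc (x / 2) x := fun u hu ↦ ⟨not_lt.1 hu.2, hSx hu.1⟩
  have hl : l ≤ x / 2 := by
    have := measureReal_mono hT (measure_Icc_lt_top (μ := volume)).ne
    rw [Real.volume_real_Icc_of_le (by linarith)] at this
    linarith
  have hmass : ∀ t ∈ Icc (x - l / 2) x, x * κ * l / 4 ≤ mass f t := fun t ht ↦ by
    have ht0 : 0 ≤ t := by linarith [ht.1, measureReal_nonneg (μ := volume) (s := T)]
    have hhalf : l / 2 ≤ volume.real (T ∩ Iic t) := by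
      linarith [measureReal_le_measureReal_inter_Iic_add hT ht.2, ht.1]
    calc x * κ * l / 4 = x / 2 * κ * (l / 2) := by ring
      _ ≤ x / 2 * κ * volume.real (T ∩ Iic t) := by gcongr
      _ ≤ mass f t :=
          mul_measureReal_le_mass hf hf0 ((hS.diff measurableSet_Iio).inter measurableSet_Iic)
            ht0 (fun u hu ↦ ⟨by linarith [(hT hu.1).1], hu.2⟩) fun u hu ↦
              mul_le_mul (hT hu.1).1 (hfS u hu.1.1) hκ (by linarith [(hT hu.1).1])
  have h := le_counting_of_le_mass hf hf0 hc (by positivity : 0 ≤ x * κ * l / 4)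
    (by linarith : 0 < x - l / 2) (by linarith [measureReal_nonneg (μ := volume) (s := T)]) hmass
  calc c * κ * l ^ 2 / 8 = c * (x * κ * l / 4) * (x - (x - l / 2)) / x := by field_simp; ring
    _ ≤ counting c f x := h

theorem volume_le_of_subset_Iic_of_counting_le (hf : Continuous f)
    (hf0 : ∀ r, 0 ≤ r → 0 ≤ f r) (hc : 0 < c) {S : Set ℝ} (hS : MeasurableSet S)
    (hS1 : S ⊆ Ici 1) (hSx : S ⊆ Iic x) (hκ : 0 < κ) (hfS : ∀ u ∈ S, κ ≤ f u) {C : ℝ}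
    (hC : counting c f x ≤ C) :
    volume S ≤ ENNReal.ofReal (2 * C / (c * κ) + √(8 * C / (c * κ))) := by
  rcases S.eq_empty_or_nonempty with rfl | ⟨u, hu⟩
  · simp
  have hx : 0 < x := zero_lt_one.trans_le ((hS1 hu).trans (hSx hu))
  have hfin : volume S ≠ ⊤ :=
    ((measure_mono (fun v hv ↦ ⟨hS1 hv, hSx hv⟩ : S ⊆ Icc 1 x)).trans_lt measure_Icc_lt_top).ne
  have h₁ : volume.real (S ∩ Iio (x / 2)) ≤ 2 * C / (c * κ) := by
    rw [le_div_iff₀ (by positivity)]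
    linarith [mul_measureReal_inter_Iio_half_le hf hf0 hc.le hS hS1 hκ.le hfS hx]
  have h₂ : volume.real (S \ Iio (x / 2)) ≤ √(8 * C / (c * κ)) := by
    have hC0 : 0 ≤ C := (counting_nonneg hf0 hc.le hx.le).trans hC
    rw [Real.le_sqrt measureReal_nonneg (div_nonneg (by linarith) (by positivity)),
      le_div_iff₀ (by positivity)]
    linarith [mul_sq_measureReal_diff_Iio_half_le hf hf0 hc.le hS hSx hκ.le hfS hx]
  rw [← ofReal_measureReal hfin]
  refine ENNReal.ofReal_le_ofReal ?_
  calc volume.real S = volume.real ((S ∩ Iio (x / 2)) ∪ (S \ Iio (x / 2))) := by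
        rw [inter_union_sdiff]
    _ ≤ _ := (measureReal_union_le _ _).trans (add_le_add h₁ h₂)

theorem volume_le_of_forall_counting_le (hf : Continuous f) (hf0 : ∀ r, 0 ≤ r → 0 ≤ f r)
    (hc : 0 < c) (htend : Tendsto (counting c f) atTop atTop) {S : Set ℝ} (hS : MeasurableSet S)
    (hS1 : S ⊆ Ici 1) (hκ : 0 < κ) (hfS : ∀ u ∈ S, κ ≤ f u) {C : ℝ}
    (hSC : ∀ u ∈ S, counting c f u ≤ C) :
    volume S ≤ ENNReal.ofReal (2 * C / (c * κ) + √(8 * C / (c * κ))) := by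
  rcases S.eq_empty_or_nonempty with rfl | ⟨u, hu⟩
  · simp
  set X := {r | counting c f r ≤ C}
  have hXbdd : BddAbove X := by
    obtain ⟨R, hR⟩ := eventually_atTop.1 (htend.eventually_gt_atTop C)
    exact ⟨R, fun r hr ↦ le_of_not_ge fun hRr ↦ (hR r hRr).not_ge hr⟩
  have hX : sSup X ∈ X :=
    (isClosed_le (continuous_counting hf) continuous_const).csSup_mem ⟨u, hSC u hu⟩ hXbdd
  exact volume_le_of_subset_Iic_of_counting_le hf hf0 hc hS hS1
    (fun v hv ↦ le_csSup hXbdd (hSC v hv)) hκ hfS hX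

theorem volume_inter_counting_preimage_Ico_le (hf : Continuous f) (hf0 : ∀ r, 0 ≤ r → 0 ≤ f r)
    (hc : 0 < c) (htend : Tendsto (counting c f) atTop atTop) {p : ℝ} (hp : 0 ≤ p) {S : Set ℝ}
    (hS : MeasurableSet S) (hS1 : S ⊆ Ici 1) (hSf : ∀ u ∈ S, counting c f u ^ p < f u) (m : ℕ) :
    volume (S ∩ counting c f ⁻¹' Ico (2 ^ m) (2 ^ (m + 1))) ≤
      ENNReal.ofReal (4 / c * (2 / 2 ^ p) ^ m + √(16 / c * (2 / 2 ^ p) ^ m)) := by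
  have hκ : ∀ u ∈ S ∩ counting c f ⁻¹' Ico (2 ^ m) (2 ^ (m + 1)), (2 ^ p) ^ m ≤ f u :=
    fun u hu ↦ calc ((2 : ℝ) ^ p) ^ m = ((2 : ℝ) ^ m) ^ p := Real.rpow_pow_comm (by norm_num) p m
      _ ≤ counting c f u ^ p := Real.rpow_le_rpow (by positivity) hu.2.1 hp
      _ ≤ f u := (hSf u hu.1).le
  have h := volume_le_of_forall_counting_le hf hf0 hc htend
    (hS.inter ((continuous_counting hf).measurable measurableSet_Ico))
    (inter_subset_left.trans hS1) (by positivity) hκ fun u hu ↦ hu.2.2.le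
  have hq : ∀ k : ℝ, k * 2 ^ (m + 1) / (c * (2 ^ p) ^ m) = 2 * k / c * (2 / 2 ^ p) ^ m :=
    fun k ↦ by
      rw [div_pow]
      field_simp
      ring
  rwa [hq, hq, show 2 * 2 / c = 4 / c by norm_num, show 2 * 8 / c = 16 / c by norm_num] at h

theorem summable_sqrt_mul_geometric {A q : ℝ} (hA : 0 ≤ A) (hq0 : 0 ≤ q) (hq1 : q < 1) :
    Summable fun m : ℕ ↦ √(A * q ^ m) := by
  have h : ∀ m : ℕ, √(A * q ^ m) = √A * √q ^ m := fun m ↦ by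
    rw [Real.sqrt_mul hA, ← Real.sqrt_sq (pow_nonneg (Real.sqrt_nonneg q) m), ← pow_mul,
      pow_mul', Real.sq_sqrt hq0]
  simp_rw [h]
  exact (summable_geometric_of_lt_one (Real.sqrt_nonneg q)
    ((Real.sqrt_lt' one_pos).2 (by simpa using hq1))).mul_left _

theorem volume_setOf_counting_rpow_lt_lt_top_of_tendsto (hf : Continuous f)
    (hf0 : ∀ r, 0 ≤ r → 0 ≤ f r) (hc : 0 < c) {p : ℝ} (hp : 1 < p)
    (htend : Tendsto (counting c f) atTop atTop) :
    volume {r | 0 ≤ r ∧ counting c f r ^ p < f r} < ⊤ := by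
  set E := {r | 0 ≤ r ∧ counting c f r ^ p < f r}
  obtain ⟨r₁, hr₁⟩ := eventually_atTop.1 (htend.eventually_ge_atTop 1)
  set r₂ := max r₁ 1
  set S : ℕ → Set ℝ := fun m ↦ E ∩ Ioi r₂ ∩ counting c f ⁻¹' Ico (2 ^ m) (2 ^ (m + 1))
  have hcover : E ⊆ Icc 0 r₂ ∪ ⋃ m, S m := fun r hr ↦ by
    by_cases h : r ≤ r₂
    · exact Or.inl ⟨hr.1, h⟩
    · obtain ⟨m, hm⟩ :=
        exists_nat_pow_near (hr₁ r ((le_max_left _ _).trans (not_le.1 h).le)) one_lt_two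
      exact Or.inr (mem_iUnion.2 ⟨m, ⟨hr, not_le.1 h⟩, hm⟩)
  have hE : MeasurableSet (E ∩ Ioi r₂) :=
    (measurableSet_Ici.inter (measurableSet_lt
      ((continuous_counting hf).measurable.pow_const p) hf.measurable)).inter measurableSet_Ioi
  set q : ℝ := 2 / 2 ^ p
  have hq0 : 0 ≤ q := by positivity
  have hq1 : q < 1 := by
    rw [div_lt_one (by positivity)]
    simpa using Real.rpow_lt_rpow_of_exponent_lt one_lt_two hp
  have hsum : Summable fun m : ℕ ↦ 4 / c * q ^ m + √(16 / c * q ^ m) :=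
    ((summable_geometric_of_lt_one hq0 hq1).mul_left _).add
      (summable_sqrt_mul_geometric (by positivity) hq0 hq1)
  calc volume E ≤ volume (Icc 0 r₂) + ∑' m, volume (S m) :=
        (measure_mono hcover).trans ((measure_union_le _ _).trans
          (by gcongr; exact measure_iUnion_le S))
    _ ≤ ENNReal.ofReal r₂ + ENNReal.ofReal (∑' m : ℕ, (4 / c * q ^ m + √(16 / c * q ^ m))) := by
        rw [Real.volume_Icc, sub_zero, ENNReal.ofReal_tsum_of_nonneg (fun m ↦ by positivity) hsum]
        gcongr with m
        exact volume_inter_counting_preimage_Ico_le hf hf0 hc htend (by linarith) hE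
          (fun u hu ↦ show (1 : ℝ) ≤ u from (le_max_right r₁ 1).trans hu.2.le)
          (fun u hu ↦ hu.1.2) m
    _ < ⊤ := ENNReal.add_lt_top.2 ⟨ENNReal.ofReal_lt_top, ENNReal.ofReal_lt_top⟩

theorem volume_setOf_counting_rpow_lt_lt_top (hf : Continuous f) (hf0 : ∀ r, 0 ≤ r → 0 ≤ f r)
    (hc : 0 < c) {p : ℝ} (hp : 1 < p) :
    volume {r | 0 ≤ r ∧ counting c f r ^ p < f r} < ⊤ := by
  by_cases h : ∃ t₀, 0 ≤ t₀ ∧ 0 < f t₀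
  · obtain ⟨t₀, ht₀, hft₀⟩ := h
    exact volume_setOf_counting_rpow_lt_lt_top_of_tendsto hf hf0 hc hp
      (tendsto_counting_atTop hf hf0 hc ht₀ hft₀)
  · have hE : {r | 0 ≤ r ∧ counting c f r ^ p < f r} = ∅ :=
      eq_empty_of_forall_notMem fun r hr ↦ h ⟨r, hr.1,
        (Real.rpow_nonneg (counting_nonneg hf0 hc.le hr.1) p).trans_lt hr.2⟩
    simp [hE]

end RadialCounting

open RadialCounting in
theorem circle_average_le_counting_pow_general (γ : ℂ → ℝ) (hc : Continuous γ)
    (hnn : ∀ z, 0 ≤ γ z) (N : ℝ → ℝ)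
    (hN : ∀ r : ℝ, N r =
      ∫ t in (0 : ℝ)..r, (1 / t) * ∫ z in Metric.ball (0 : ℂ) t, γ z ∂volume)
    (δ : ℝ) (hδ : 0 < δ) :
    volume {r : ℝ | 0 ≤ r ∧
      N r ^ ((1 + δ) ^ 2) <
        (1 / (2 * Real.pi)) *
          ∫ θ in (0 : ℝ)..(2 * Real.pi), γ ((r : ℂ) * Complex.exp (θ * Complex.I))} < ⊤ := by
  set f := circleAverage γ 0
  have hNf : ∀ r, 0 ≤ r → N r = counting (2 * π) f r := fun r hr ↦ by
    rw [hN r, counting]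
    refine intervalIntegral.integral_congr fun t ht ↦ ?_
    rw [uIcc_of_le hr] at ht
    simp only [setIntegral_ball_eq_two_pi_smul_integral_circleAverage hc ht.1, mass, smul_eq_mul]
    ring
  have hset : {r : ℝ | 0 ≤ r ∧ N r ^ ((1 + δ) ^ 2) < (1 / (2 * π)) *
      ∫ θ in (0 : ℝ)..(2 * π), γ ((r : ℂ) * Complex.exp (θ * Complex.I))} =
      {r | 0 ≤ r ∧ counting (2 * π) f r ^ ((1 + δ) ^ 2) < f r} := by
    ext r
    refine and_congr_right fun hr ↦ ?_
    simp [hNf r hr, f, circleAverage_def, circleMap]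
  rw [hset]
  exact volume_setOf_counting_rpow_lt_lt_top hc.circleAverage
    (fun _ _ ↦ circleAverage_nonneg_of_nonneg fun z _ ↦ hnn z) (by positivity) (by nlinarith)

/-- Calculus-lemma estimate for the circle average: with
`N r = ∫₀^r (1/t)(∫_{Δ(t)} γ dA) dt` and `N r ≥ 1/r` for large `r`, for every `δ > 0`
the inequality `∫₀^{2π} γ(r e^{iθ}) dθ/(2π) ≤ N(r)^{(1+δ)²}` holds outside a set of
finite Lebesgue measure. -/
theorem circle_average_le_counting_pow (γ : ℂ → ℝ) (hc : Continuous γ)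
    (hnn : ∀ z, 0 ≤ γ z) (N : ℝ → ℝ)
    (hN : ∀ r : ℝ, N r =
      ∫ t in (0 : ℝ)..r, (1 / t) * ∫ z in Metric.ball (0 : ℂ) t, γ z ∂volume)
    (hfin : ∀ r : ℝ, 0 < r →
      IntervalIntegrable (fun t => (1 / t) * ∫ z in Metric.ball (0 : ℂ) t, γ z ∂volume)
        volume 0 r)
    (hgrow : ∃ r₀ : ℝ, 0 < r₀ ∧ ∀ r : ℝ, r₀ ≤ r → 1 / r ≤ N r)
    (δ : ℝ) (hδ : 0 < δ) :
    volume {r : ℝ | 0 ≤ r ∧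
      N r ^ ((1 + δ) ^ 2) <
        (1 / (2 * Real.pi)) *
          ∫ θ in (0 : ℝ)..(2 * Real.pi), γ ((r : ℂ) * Complex.exp (θ * Complex.I))} < ⊤ :=
  circle_average_le_counting_pow_general γ hc hnn N hN δ hδ
end
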